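/- arXiv:1703.09088 — 2 statements merged into one kernel-verified Lean document; each statement's English description precedes it below -/
import Mathlib

section
/- Let L/K be a finite Galois extension of number fields with Galois group G, let p be an odd prime, and let k be any integer. Then the ℤ_p[G]-module H_k^+(L) ⊗_ℤ ℤ_p is projective. -/
/-!
Let `Σ` be the set of embeddings `L → ℂ`, on which `G = Gal(L/K)` acts freely on the right by
precomposition (embeddings are injective). Then `ℤ_p^Σ` is a free `ℤ_p[G]`-module, with one
generator for each `G`-orbit. Inside the permutation module `ℤ^Σ`, the map
`f ↦ f + (-1)^k f ∘ c` lands in `H_k^+(L)` and restricts to multiplication by `2` on it.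
Since `p` is odd, `2` is invertible in `ℤ_p`, so `ℤ_p ⊗ H_k^+(L)` is a direct summand of
`ℤ_p ⊗ ℤ^Σ ≅ ℤ_p^Σ`, hence projective.
-/

open scoped TensorProduct

/-- For a number field `L` and `k : ℤ`, the group `H_k^+(L)`: integer-valued functions `f` on
the set of embeddings `σ : L → ℂ` satisfying `f(conj ∘ σ) = (-1)^k · f(σ)`, viewed as a
`ℤ`-submodule of the functions `(L →+* ℂ) → ℤ`. -/
def Hplus (L : Type*) [Field L] (k : ℤ) : Submodule ℤ ((L →+* ℂ) → ℤ) where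
  carrier := {f | ∀ σ : L →+* ℂ, f ((starRingEnd ℂ).comp σ) = (((-1 : ℤˣ) ^ k : ℤˣ) : ℤ) * f σ}
  add_mem' := by
    intro a b ha hb σ
    simp only [Pi.add_apply, ha σ, hb σ]
    ring
  zero_mem' := by intro σ; simp
  smul_mem' := by
    intro c f hf σ
    simp only [Pi.smul_apply, smul_eq_mul, hf σ]
    ring

/-- The `ℤ`-linear action of the Galois group `G = Gal(L/K)` on `H_k^+(L)`, given by
`(g • f)(σ) = f(σ ∘ g)`. -/
def galAct (K L : Type*) [Field K] [Field L] [Algebra K L] (k : ℤ) :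
    (L ≃ₐ[K] L) →* (↥(Hplus L k) →ₗ[ℤ] ↥(Hplus L k)) where
  toFun g :=
    { toFun := fun f =>
        ⟨fun σ => (f : (L →+* ℂ) → ℤ) (σ.comp (g : L →+* L)), by
          intro σ
          have h := f.2 (σ.comp (g : L →+* L))
          rw [← RingHom.comp_assoc] at h
          exact h⟩
      map_add' := by intro f f'; ext σ; rfl
      map_smul' := by intro c f; ext σ; rfl }
  map_one' := by
    ext f σ
    congr 1
  map_mul' g h := by
    ext f σ
    congr 1

/-- The representation of `G = Gal(L/K)` on `ℤ_p ⊗_ℤ H_k^+(L)` obtained by extending the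
action `(g • f)(σ) = f(σ ∘ g)` on `H_k^+(L)` `ℤ_p`-linearly. -/
noncomputable def galRep (p : ℕ) [Fact p.Prime] (K L : Type*) [Field K] [Field L]
    [Algebra K L] (k : ℤ) :
    Representation ℤ_[p] (L ≃ₐ[K] L) (ℤ_[p] ⊗[ℤ] ↥(Hplus L k)) where
  toFun g := (galAct K L k g).baseChange ℤ_[p]
  map_one' := by
    show LinearMap.baseChange ℤ_[p] ((galAct K L k) 1) = 1
    rw [map_one, Module.End.one_eq_id, LinearMap.baseChange_id, Module.End.one_eq_id]
  map_mul' g h := by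
    show LinearMap.baseChange ℤ_[p] ((galAct K L k) (g * h)) = _
    rw [map_mul, Module.End.mul_eq_comp, LinearMap.baseChange_comp, ← Module.End.mul_eq_comp]

open scoped MonoidAlgebra RightActions

open MulAction in
theorem MulAction.bijective_smul_orbitRel_out {M X : Type*} [Group M] [MulAction M X]
    (hfree : ∀ (g : M) (x : X), g • x = x → g = 1) :
    Function.Bijective fun p : orbitRel.Quotient M X × M => p.2 • p.1.out := by
  refine ⟨fun ⟨ω, g⟩ ⟨ω', g'⟩ h => ?_, fun x => ?_⟩
  · have hω : ω = ω' :=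
      calc ω = ⟦g • ω.out⟧ := by rw [orbitRel.Quotient.quotient_smul_eq, Quotient.out_eq]
        _ = ⟦g' • ω'.out⟧ := congrArg _ h
        _ = ω' := by rw [orbitRel.Quotient.quotient_smul_eq, Quotient.out_eq]
    subst hω
    have : (g'⁻¹ * g) • ω.out = ω.out := by rw [mul_smul, inv_smul_eq_iff]; exact h
    exact Prod.ext rfl (inv_mul_eq_one.mp (hfree _ _ this)).symm
  · have hx : x ∈ orbit M (Quotient.mk'' x : orbitRel.Quotient M X).out := by
      rw [← orbitRel.Quotient.orbit_eq_orbit_out _ Quotient.out_eq',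
        orbitRel.Quotient.mem_orbit]
    obtain ⟨g, hg⟩ := hx
    exact ⟨(_, g), hg⟩

namespace Representation

section Retract

variable {A G V W : Type*} [CommSemiring A] [Monoid G] [AddCommMonoid V] [Module A V]
  [AddCommMonoid W] [Module A W] {ρ : Representation A G V} {τ : Representation A G W}

theorem projective_asModule_of_retract [Module.Projective A[G] τ.asModule]
    (i : IntertwiningMap ρ τ) (s : IntertwiningMap τ ρ) (h : s.comp i = .id ρ) :
    Module.Projective A[G] ρ.asModule :=
  .of_split (IntertwiningMap.equivLinearMapAsModule ρ τ i)
    (IntertwiningMap.equivLinearMapAsModule τ ρ s) (by ext v; exact congr($h v))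

theorem projective_asModule_of_equiv [Module.Projective A[G] τ.asModule] (e : ρ.Equiv τ) :
    Module.Projective A[G] ρ.asModule :=
  projective_asModule_of_retract e.toIntertwiningMap e.symm.toIntertwiningMap
    (IntertwiningMap.ext (LinearMap.ext e.symm_apply_apply))

end Retract

section BaseChange

variable {R : Type*} (S : Type*) [CommSemiring R] [CommSemiring S] [Algebra R S]
  {G V W : Type*} [Monoid G] [AddCommMonoid V] [Module R V] [AddCommMonoid W] [Module R W]
  {ρ : Representation R G V} {τ : Representation R G W}

def baseChange (ρ : Representation R G V) : Representation S G (S ⊗[R] V) where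
  toFun g := (ρ g).baseChange S
  map_one' := by
    rw [map_one, Module.End.one_eq_id, LinearMap.baseChange_id, Module.End.one_eq_id]
  map_mul' g h := by
    rw [map_mul, Module.End.mul_eq_comp, LinearMap.baseChange_comp, Module.End.mul_eq_comp]

@[simp] lemma baseChange_apply (g : G) : ρ.baseChange S g = (ρ g).baseChange S := rfl

def IntertwiningMap.baseChange (f : IntertwiningMap ρ τ) :
    IntertwiningMap (ρ.baseChange S) (τ.baseChange S) where
  __ := f.toLinearMap.baseChange S
  isIntertwining' g := by
    rw [baseChange_apply, baseChange_apply, ← LinearMap.baseChange_comp, f.2,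
      LinearMap.baseChange_comp]

theorem projective_asModule_baseChange_of_comp_eq_smul
    [Module.Projective S[G] (τ.baseChange S).asModule]
    (i : IntertwiningMap ρ τ) (e : IntertwiningMap τ ρ) {n : R} (h : e.comp i = n • .id ρ)
    (hn : IsUnit (algebraMap R S n)) :
    Module.Projective S[G] (ρ.baseChange S).asModule := by
  refine projective_asModule_of_retract (i.baseChange S)
    ((↑hn.unit⁻¹ : S) • e.baseChange S) ?_
  refine IntertwiningMap.ext (LinearMap.ext fun x => ?_)
  change (↑hn.unit⁻¹ : S) • (e.toLinearMap.baseChange S) (i.toLinearMap.baseChange S x) = x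
  rw [← LinearMap.comp_apply, ← LinearMap.baseChange_comp, ← IntertwiningMap.comp_toLinearMap,
    h, IntertwiningMap.toLinearMap_smul, IntertwiningMap.toLinearMap_id, LinearMap.baseChange_smul,
    LinearMap.baseChange_id, LinearMap.smul_apply, LinearMap.id_apply, ← algebraMap_smul S n x,
    smul_smul, IsUnit.val_inv_mul, one_smul]

end BaseChange

section RightAction

open MulAction MulOpposite

variable (R G X : Type*) [CommSemiring R]

def ofRightAction [Monoid G] [MulAction Gᵐᵒᵖ X] : Representation R G (X → R) where
  toFun g := LinearMap.funLeft R R (· <• g)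
  map_one' := by ext f x; simp [LinearMap.funLeft]
  map_mul' g h := by ext f x; simp [LinearMap.funLeft, op_smul_op_smul]

variable {R G X}

lemma ofRightAction_apply [Monoid G] [MulAction Gᵐᵒᵖ X] (g : G) (f : X → R) (x : X) :
    ofRightAction R G X g f x = f (x <• g) := rfl

lemma ofRightAction_single [Group G] [MulAction Gᵐᵒᵖ X] [DecidableEq X] (g : G) (x : X)
    (r : R) :
    ofRightAction R G X g (Pi.single x r) = Pi.single (x <• g⁻¹) r := by
  ext y
  simp only [ofRightAction_apply, Pi.single_apply, op_inv, eq_inv_smul_iff]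

theorem free_asModule_ofRightAction [Group G] [MulAction Gᵐᵒᵖ X] [Finite X]
    (hfree : ∀ (g : G) (x : X), x <• g = x → g = 1) :
    Module.Free R[G] (ofRightAction R G X).asModule := by
  classical
  let Ω := orbitRel.Quotient Gᵐᵒᵖ X
  let b : (Ω →₀ R[G]) →ₗ[R[G]] (ofRightAction R G X).asModule :=
    Finsupp.linearCombination R[G] fun ω =>
      (ofRightAction R G X).asModuleEquiv.symm (Pi.single ω.out 1)
  let e : (Σ _ : Ω, G) ≃ X :=
    (Equiv.sigmaEquivProd Ω G).trans <|
      (Equiv.prodCongr (.refl Ω) ((Equiv.inv G).trans opEquiv)).trans <|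
        .ofBijective _ <|
          bijective_smul_orbitRel_out fun g x h => unop_injective (hfree g.unop x h)
  let B₁ : Module.Basis (Σ _ : Ω, G) R (Ω →₀ R[G]) :=
    Finsupp.basis fun _ => MonoidAlgebra.basis G R
  let B₂ : Module.Basis X R (ofRightAction R G X).asModule := Pi.basisFun R X
  -- Over `R`, `b` sends `single ω (single g 1)` to `Pi.single (ω.out <• g⁻¹) 1`; these
  -- exhaust the standard basis of `X → R`, each exactly once, because the action is free.
  have hb : b.restrictScalars R = B₁.equiv B₂ e := by
    refine B₁.ext fun ⟨ω, g⟩ => ?_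
    rw [LinearEquiv.coe_coe, Module.Basis.equiv_apply, LinearMap.restrictScalars_apply]
    simp only [b, B₁, Finsupp.coe_basis, MonoidAlgebra.basis_apply]
    rw [Finsupp.linearCombination_single, single_smul, one_smul, LinearEquiv.apply_symm_apply]
    exact ofRightAction_single g ω.out 1
  have : Function.Bijective b := by
    rw [← LinearMap.coe_restrictScalars R, hb]
    exact (B₁.equiv B₂ e).bijective
  exact .of_equiv (LinearEquiv.ofBijective b this)

end RightAction

section BaseChangeOfRightAction

variable (R S G X : Type*) [CommSemiring R] [CommSemiring S] [Algebra R S] [Monoid G]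
  [MulAction Gᵐᵒᵖ X] [Fintype X] [DecidableEq X]

def baseChangeOfRightActionEquiv :
    ((ofRightAction R G X).baseChange S).Equiv (ofRightAction S G X) :=
  .mk (TensorProduct.piScalarRight R S S X) fun g =>
    TensorProduct.AlgebraTensorModule.ext fun s f => by
      ext x
      simp [ofRightAction]

end BaseChangeOfRightAction

end Representation

lemma Int.units_val_mul_self (u : ℤˣ) : (u : ℤ) * u = 1 := by
  rw [← Units.val_mul, Int.units_mul_self, Units.val_one]

instance {K L A : Type*} [CommSemiring K] [Semiring L] [Semiring A] [Algebra K L] :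
    MulAction (L ≃ₐ[K] L)ᵐᵒᵖ (L →+* A) where
  smul g σ := σ.comp (g.unop : L →+* L)
  one_smul _ := rfl
  mul_smul _ _ _ := rfl

theorem AlgEquiv.eq_one_of_ringHom_op_smul_eq {K L A : Type*} [Field K] [Field L] [Semiring A]
    [Nontrivial A] [Algebra K L] {g : L ≃ₐ[K] L} {σ : L →+* A} (h : σ <• g = σ) :
    g = 1 :=
  AlgEquiv.ext fun x => σ.injective congr($h x)

theorem PadicInt.isUnit_two {p : ℕ} [Fact p.Prime] (hp : Odd p) : IsUnit (2 : ℤ_[p]) := by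
  rw [PadicInt.isUnit_iff, ← Nat.cast_ofNat, PadicInt.norm_natCast_eq_one_iff]
  exact Nat.coprime_two_right.mpr hp

namespace Hplus

open Representation

variable (K L : Type*) [Field K] [Field L] [Algebra K L] (k : ℤ)

def inclusion :
    IntertwiningMap (galAct K L k) (ofRightAction ℤ (L ≃ₐ[K] L) (L →+* ℂ)) where
  __ := (Hplus L k).subtype
  isIntertwining' _ := rfl

def symmetrize :
    IntertwiningMap (ofRightAction ℤ (L ≃ₐ[K] L) (L →+* ℂ)) (galAct K L k) where
  __ := (LinearMap.id + (((-1 : ℤˣ) ^ k : ℤˣ) : ℤ) •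
      LinearMap.funLeft ℤ ℤ ((starRingEnd ℂ).comp ·)).codRestrict (Hplus L k) fun f σ => by
    have hσ : (starRingEnd ℂ).comp ((starRingEnd ℂ).comp σ) = σ :=
      RingHom.ext fun x => Complex.conj_conj (σ x)
    change f _ + _ * f ((starRingEnd ℂ).comp ((starRingEnd ℂ).comp σ)) = _ * (f σ + _ * f _)
    rw [hσ]
    linear_combination (-f ((starRingEnd ℂ).comp σ)) * Int.units_val_mul_self _
  isIntertwining' _ := rfl

theorem symmetrize_comp_inclusion :
    (symmetrize K L k).comp (inclusion K L k) = (2 : ℤ) • .id _ := by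
  refine IntertwiningMap.ext (LinearMap.ext fun f => Subtype.ext (funext fun σ => ?_))
  change f.1 σ + _ * f.1 ((starRingEnd ℂ).comp σ) = 2 * f.1 σ
  rw [f.2 σ]
  linear_combination f.1 σ * Int.units_val_mul_self _

end Hplus

lemma galRep_eq_baseChange (p : ℕ) [Fact p.Prime] (K L : Type*) [Field K] [Field L]
    [Algebra K L] (k : ℤ) : galRep p K L k = Representation.baseChange ℤ_[p] (galAct K L k) :=
  rfl

theorem hplus_tensor_padic_projective_general (p : ℕ) [Fact p.Prime] (hp : Odd p)
    (K L : Type*) [Field K] [Field L] [NumberField L] [Algebra K L] (k : ℤ) :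
    Module.Projective (MonoidAlgebra ℤ_[p] (L ≃ₐ[K] L)) (galRep p K L k).asModule := by
  classical
  rw [galRep_eq_baseChange]
  have := Representation.free_asModule_ofRightAction (R := ℤ_[p]) (G := L ≃ₐ[K] L)
    (X := L →+* ℂ) fun _ _ => AlgEquiv.eq_one_of_ringHom_op_smul_eq
  have := Representation.projective_asModule_of_equiv
    (Representation.baseChangeOfRightActionEquiv ℤ ℤ_[p] (L ≃ₐ[K] L) (L →+* ℂ))
  exact Representation.projective_asModule_baseChange_of_comp_eq_smul ℤ_[p]
    (Hplus.inclusion K L k) (Hplus.symmetrize K L k) (Hplus.symmetrize_comp_inclusion K L k)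
    (by simpa using PadicInt.isUnit_two hp)

/-- Let `L/K` be a finite Galois extension of number fields with Galois group `G`, let `p` be
an odd prime and `k` any integer. Then the `ℤ_p[G]`-module `H_k^+(L) ⊗_ℤ ℤ_p` is projective. -/
theorem hplus_tensor_padic_projective (p : ℕ) [Fact p.Prime] (hp : Odd p)
    (K L : Type*) [Field K] [Field L] [NumberField K] [NumberField L] [Algebra K L]
    [IsGalois K L] (k : ℤ) :
    Module.Projective (MonoidAlgebra ℤ_[p] (L ≃ₐ[K] L)) (galRep p K L k).asModule :=
  hplus_tensor_padic_projective_general p hp K L k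
end

section
/- Let r ≥ 3 be an odd integer. Then there exist a complex number ℓ and a nonzero rational number q such that (s − (1−r)) · Γ_ℝ(s) tends to ℓ as s tends to 1−r within the punctured neighborhood of 1−r in ℂ, and Γ_ℝ(r) = q · π^{1−r} · ℓ. In other words, the ratio of Γ_ℝ(r) to the leading coefficient of Γ_ℝ at its simple pole s = 1−r lies in π^{1−r} · ℚ^×. -/
/-! The functional equation `Γ_ℝ(s + 2) = Γ_ℝ(s) · s / (2π)` gives both quantities by induction on
`n`, where `r = 2n + 1`: starting from `Γ_ℝ(1) = 1` it yields `Γ_ℝ(2n + 1) = (2n - 1)‼ / (2π)^n`,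
and starting from the residue `2` at `0` it yields the residue `2 (-π)^n / n!` at `-2n`.
Their ratio is `π^{-2n}` times a nonzero rational. -/

open Filter Topology Complex Real Nat

lemma Complex.Gammaℝ_two_mul_add_one (n : ℕ) :
    Gammaℝ (2 * n + 1) = (2 * n - 1 : ℕ)‼ / (2 * π) ^ n := by
  induction n with
  | zero => simp
  | succ n ih =>
    have h : (2 * (n + 1 : ℕ) + 1 : ℂ) = 2 * n + 1 + 2 := by push_cast; ring
    rw [h, Gammaℝ_add_two (by exact_mod_cast (2 * n).succ_ne_zero), ih,
      show 2 * (n + 1) - 1 = 2 * n + 1 by omega, doubleFactorial_add_one]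
    push_cast
    field_simp
    ring

lemma Complex.Gammaℝ_residue_neg_two_mul (n : ℕ) :
    Tendsto (fun s ↦ (s + 2 * n) * Gammaℝ s) (𝓝[≠] (-(2 * n))) (𝓝 (2 * (-π) ^ n / n !)) := by
  induction n with
  | zero => simpa using Gammaℝ_residue_zero
  | succ n ih =>
    set p : ℂ := -(2 * (n + 1 : ℕ))
    have hp : p ≠ 0 := by simp [p]; exact_mod_cast n.succ_ne_zero
    have hshift : Tendsto (· + 2) (𝓝[≠] p) (𝓝[≠] (-(2 * n : ℂ))) := by
      refine tendsto_nhdsWithin_iff.mpr ⟨?_, eventually_nhdsWithin_of_forall fun s hs h ↦ hs ?_⟩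
      · refine ((continuous_add_const (2 : ℂ)).tendsto' _ _ ?_).mono_left nhdsWithin_le_nhds
        push_cast [p]; ring
      · simp only [Set.mem_singleton_iff] at h ⊢
        push_cast [p]; linear_combination h
    have hfactor : Tendsto (fun s : ℂ ↦ 2 * π / s) (𝓝[≠] p) (𝓝 (2 * π / p)) :=
      ((continuousAt_const.div continuousAt_id hp).tendsto).mono_left nhdsWithin_le_nhds
    have hvalue : 2 * π / p * (2 * (-π) ^ n / n !) = 2 * (-π : ℂ) ^ (n + 1) / (n + 1)! := by
      simp only [p, factorial_succ]
      push_cast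
      field_simp
      ring
    refine hvalue ▸ (hfactor.mul (ih.comp hshift)).congr' ?_
    filter_upwards [nhdsWithin_le_nhds (isOpen_ne.mem_nhds hp)] with s hs
    simp only [Function.comp_apply, Gammaℝ_add_two hs]
    push_cast
    field_simp
    ring

/-- Let `r ≥ 3` be an odd integer. Then `Γ_ℝ` has a simple pole at `s = 1 - r` with
leading coefficient `ℓ`, and `Γ_ℝ(r) = q · π^{1-r} · ℓ` for some nonzero rational `q`;
i.e. the ratio of `Γ_ℝ(r)` to the leading coefficient of `Γ_ℝ` at its simple pole
`s = 1 - r` lies in `π^{1-r} · ℚ^×`. -/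
theorem gammaR_value_div_leading_term_odd (r : ℤ) (hr : 3 ≤ r) (ho : Odd r) :
    ∃ ℓ : ℂ, ∃ q : ℚ, q ≠ 0 ∧
      Tendsto (fun s : ℂ => (s - ((1 : ℂ) - (r : ℂ))) * Complex.Gammaℝ s)
        (𝓝[≠] ((1 : ℂ) - (r : ℂ))) (𝓝 ℓ) ∧
      Complex.Gammaℝ (r : ℂ) = (q : ℂ) * (Real.pi : ℂ) ^ (1 - r) * ℓ := by
  obtain ⟨n, rfl⟩ := ho
  lift n to ℕ using by omega
  have hpole : (1 : ℂ) - ((2 * n + 1 : ℤ) : ℂ) = -(2 * n) := by push_cast; ring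
  refine ⟨2 * (-π) ^ n / n !, (2 * n - 1)‼ * n ! * (-1) ^ n / 2 ^ (n + 1),
    by simp [(doubleFactorial_pos _).ne', factorial_ne_zero], ?_, ?_⟩
  · simpa [hpole] using Gammaℝ_residue_neg_two_mul n
  · have hexp : (1 - (2 * n + 1) : ℤ) = -(2 * n : ℕ) := by push_cast; ring
    have hsign : (-1 : ℂ) ^ n * (-1) ^ n = 1 := by rw [← mul_pow]; norm_num
    rw [hexp, zpow_neg, zpow_natCast]
    push_cast
    rw [Gammaℝ_two_mul_add_one]
    field_simp [n.factorial_ne_zero]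
    rw [neg_pow]
    linear_combination (-((2 * n - 1)‼ * 2 ^ (n + 1) * π ^ (2 * n) : ℂ)) * hsign
end
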